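/- Raising morphism property of Υ̊ (Lemma 'lem:graftMorphism', second identity): For every family F = (F^𝔩_𝔱)_{𝔱∈𝔏₊,𝔩∈𝔇} with every F^𝔩_𝔱 ∈ 𝒫, every l ∈ {0,…,d}, and every σ ∈ 𝔅, the map Υ̊^F vanishes on all but finitely many of the trees appearing in the formal series ↑_l σ, and the resulting finite sum satisfies Υ̊^F[↑_l σ] = ∂_l Υ̊^F[σ], where ∂_l acts componentwise on 𝒫^{𝔏₊}. -/

import Mathlib

/-
Common framework: multi-indices, the algebra of smooth functions on ℝ^𝒪,
and the spaces of decorated trees 𝒱 and 𝔅 of [Bruned–Chandra–Chevyrev–Hairer,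
"Renormalising SPDEs in regularity structures"], presented abstractly together
with the defining recursions of the various operators on them.
-/

open scoped BigOperators Classical

namespace SPDERenorm

/-! ### Multi-indices in `ℕ^{d+1}` -/

abbrev MIdx (d : ℕ) := Fin (d+1) → ℕ

/-- `k! = ∏ᵢ k[i]!`. -/
def mfact {d : ℕ} (k : MIdx d) : ℕ := ∏ i, Nat.factorial (k i)

/-- `C(k,ℓ) = ∏ᵢ binom(k[i], ℓ[i])`. -/
def mchoose {d : ℕ} (k l : MIdx d) : ℕ := ∏ i, Nat.choose (k i) (l i)

/-- `|k| = Σᵢ k[i]`. -/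
def msize {d : ℕ} (k : MIdx d) : ℕ := ∑ i, k i

/-- The unit multi-index `e_i`. -/
def munit {d : ℕ} (i : Fin (d+1)) : MIdx d := Pi.single i 1

/-- Sum of `f ℓ` over all multi-indices `ℓ ≤ m` (componentwise). -/
noncomputable def msum {d : ℕ} {A : Type*} [AddCommMonoid A] (m : MIdx d) (f : MIdx d → A) : A :=
  ∑ e : (∀ i : Fin (d+1), Fin (m i + 1)), f fun i => (e i : ℕ)

/-- The scaled size `|k|_𝔰 = Σᵢ k[i]·𝔰ᵢ`. -/
noncomputable def wdeg {d : ℕ} (s : Fin (d+1) → ℝ) (k : MIdx d) : ℝ := ∑ i, (k i : ℝ) * s i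

/-- The index set `𝒪 = 𝔏₊ × ℕ^{d+1}`. -/
abbrev Odx (Lp : Type) (d : ℕ) := Lp × MIdx d

/-! ### Functions on `ℝ^𝒪` and differential operators -/

/-- Real-valued functions on `ℝ^𝒪`. -/
abbrev FnO (Lp : Type) (d : ℕ) := (Odx Lp d → ℝ) → ℝ

/-- The coordinate function `𝒳_o`. -/
def Xc {Lp : Type} {d : ℕ} (o : Odx Lp d) : FnO Lp d := fun x => x o

/-- The partial derivative `D_o` in the `o`-th coordinate. -/
noncomputable def Dpart {Lp : Type} {d : ℕ} [DecidableEq Lp] (o : Odx Lp d) (F : FnO Lp d) :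
    FnO Lp d :=
  fun x => deriv (fun t : ℝ => F (Function.update x o t)) (x o)

/-- Iterated partial derivatives `D_{o₁} ∘ ⋯ ∘ D_{oₙ}` over a list. -/
noncomputable def Dlist {Lp : Type} {d : ℕ} [DecidableEq Lp] (L : List (Odx Lp d))
    (F : FnO Lp d) : FnO Lp d :=
  L.foldr Dpart F

/-- The derivation `∂_i F = Σ_{(𝔱,p)} 𝒳_{(𝔱,p+e_i)} · D_{(𝔱,p)} F`. -/
noncomputable def pderivO {Lp : Type} {d : ℕ} [DecidableEq Lp] (i : Fin (d+1)) (F : FnO Lp d) :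
    FnO Lp d :=
  fun x => ∑ᶠ o : Odx Lp d, Xc (o.1, o.2 + munit i) x * Dpart o F x

/-- `∂^k = ∏ᵢ ∂ᵢ^{k[i]}`. -/
noncomputable def mpderiv {Lp : Type} {d : ℕ} [DecidableEq Lp] (k : MIdx d) (F : FnO Lp d) :
    FnO Lp d :=
  (List.finRange (d+1)).foldr (fun i G => (pderivO i)^[k i] G) F

/-- `D^α` for a finitely supported `α ∈ ℕ^𝒪`. -/
noncomputable def Dexp {Lp : Type} {d : ℕ} [DecidableEq Lp] (α : Odx Lp d →₀ ℕ)
    (F : FnO Lp d) : FnO Lp d :=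
  Dlist (Finsupp.toMultiset α).toList F

/-- `α! = ∏_o α[o]!`. -/
def afact {Lp : Type} {d : ℕ} (α : Odx Lp d →₀ ℕ) : ℕ := α.prod fun _ n => Nat.factorial n

/-- The monomial `𝒳^α`. -/
noncomputable def Xpow {Lp : Type} {d : ℕ} (α : Odx Lp d →₀ ℕ) : FnO Lp d :=
  fun x => α.prod fun o n => x o ^ n

/-- `F` depends only on the coordinates in `s`. -/
def DependsOnlyOn {Lp : Type} {d : ℕ} (F : FnO Lp d) (s : Set (Odx Lp d)) : Prop :=
  ∀ x y, (∀ o ∈ s, x o = y o) → F x = F y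

/-- Membership in `𝒞_𝒪`: smooth functions depending on finitely many coordinates. -/
def IsSmoothCO {Lp : Type} {d : ℕ} (F : FnO Lp d) : Prop :=
  ∃ (s : Finset (Odx Lp d)) (g : (↥s → ℝ) → ℝ),
    ContDiff ℝ (⊤ : ℕ∞) g ∧ ∀ x, F x = g fun o => x o.1

/-- Membership in `𝒫 ⊆ 𝒞_𝒪` (relative to the partition `𝒪 = 𝒪₊ ⊔ 𝒪₋`). -/
def IsP {Lp : Type} {d : ℕ} (Om Op : Set (Odx Lp d)) (F : FnO Lp d) : Prop :=
  ∃ (m : ℕ) (α : Fin m → (Odx Lp d →₀ ℕ)) (G : Fin m → FnO Lp d),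
    Function.Injective α ∧
    (∀ j, ∀ o ∈ (α j).support, o ∈ Om) ∧
    (∀ j, IsSmoothCO (G j)) ∧
    (∀ j, G j ≠ 0) ∧
    (∀ j, DependsOnlyOn (G j) Op) ∧
    F = fun x => ∑ j, G j x * Xpow (α j) x

/-- `F` is a real polynomial in finitely many of the coordinate functions. -/
def IsPolyFn {Lp : Type} {d : ℕ} (F : FnO Lp d) : Prop :=
  ∃ (s : Finset (Odx Lp d)) (P : MvPolynomial (↥s) ℝ),
    ∀ x, F x = MvPolynomial.eval (fun o => x o.1) P

/-! ### The trees of `𝒱` -/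

/-- The set `𝒱` of decorated rooted trees, presented abstractly: a tree is uniquely
built from a root decoration `(𝔩,k) ∈ 𝔇 × ℕ^{d+1}` and a multiset of decorated branches,
and every tree arises this way (induction). -/
structure TreeV (Lp Dr : Type) (d : ℕ) where
  V : Type
  node : Dr → MIdx d → Multiset (Odx Lp d × V) → V
  node_bij : Function.Bijective
    (fun x : Dr × MIdx d × Multiset (Odx Lp d × V) => node x.1 x.2.1 x.2.2)
  ind : ∀ P : V → Prop,
    (∀ l k (M : Multiset (Odx Lp d × V)), (∀ x ∈ M, P x.2) → P (node l k M)) → ∀ τ, P τ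

namespace TreeV

variable {Lp Dr : Type} {d : ℕ} (S : TreeV Lp Dr d)

/-- Rebuild a tree after replacing the `j`-th branch by a linear combination of trees. -/
noncomputable def replace (l : Dr) (k : MIdx d) (L : List (Odx Lp d × S.V))
    (j : Fin L.length) (w : S.V →₀ ℝ) : S.V →₀ ℝ :=
  w.sum fun τ' c => Finsupp.single (S.node l k (↑(L.set j ((L.get j).1, τ')))) c

/-- Decomposition of a tree into its root decoration and branches. -/
noncomputable def dec : S.V ≃ Dr × MIdx d × Multiset (Odx Lp d × S.V) :=
  (Equiv.ofBijective _ S.node_bij).symm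

/-- The polynomial decoration at the root. -/
noncomputable def polyOf (τ : S.V) : MIdx d := (S.dec τ).2.1

/-- The multiset of branches at the root. -/
noncomputable def branchesOf (τ : S.V) : Multiset (Odx Lp d × S.V) := (S.dec τ).2.2

/-- The commutative tree product merging the roots of `g 0, …, g (n-1)`
(adding the polynomial decorations), the merged root receiving the driver label `l`. -/
noncomputable def merge (l : Dr) {n : ℕ} (g : Fin n → S.V) : S.V :=
  S.node l (∑ r, S.polyOf (g r)) (∑ r, S.branchesOf (g r))

/-- Defining recursion of the grafting operators `⋖̂_o : 𝕍 ⊗ 𝕍 → 𝕍`. -/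
def GraftSpec [DecidableEq Lp] (graft : Odx Lp d → S.V → S.V → (S.V →₀ ℝ)) : Prop :=
  ∀ (t : Lp) (p : MIdx d) (τ : S.V) (l : Dr) (k : MIdx d) (L : List (Odx Lp d × S.V)),
    graft (t, p) τ (S.node l k ↑L) =
      msum (k ⊓ p) (fun ℓ =>
        (mchoose k ℓ : ℝ) •
          Finsupp.single (S.node l (k - ℓ) (((t, p - ℓ), τ) ::ₘ (↑L : Multiset _))) 1)
      + ∑ j : Fin L.length, S.replace l k L j (graft (t, p) τ (L.get j).2)

/-- Defining recursion of the symmetry factor `S(τ)`. -/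
def SymSpec [DecidableEq Lp] [DecidableEq S.V] (sym : S.V → ℕ) : Prop :=
  ∀ (l : Dr) (k : MIdx d) (M : Multiset (Odx Lp d × S.V)),
    sym (S.node l k M) =
      mfact k * ∏ x ∈ M.toFinset, Nat.factorial (M.count x) * sym x.2 ^ M.count x

/-- Defining recursion of the inner product on `𝕍`. -/
def IPSpec (ip : S.V → S.V → ℝ) : Prop :=
  ∀ (l l' : Dr) (k k' : MIdx d) (L L' : List (Odx Lp d × S.V)),
    ip (S.node l k ↑L) (S.node l' k' ↑L') =
      (if l = l' ∧ k = k' then (mfact k : ℝ) else 0) *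
        ∑ s : Fin L.length ≃ Fin L'.length,
          ∏ j : Fin L.length,
            (if (L.get j).1 = (L'.get (s j)).1 then ip (L.get j).2 (L'.get (s j)).2 else 0)

/-- Defining recursion of `Υ^F`. -/
def UpsSpec [DecidableEq Lp] (F : Lp → Dr → FnO Lp d) (Ups : Lp → S.V → FnO Lp d) : Prop :=
  ∀ (t : Lp) (l : Dr) (k : MIdx d) (L : List (Odx Lp d × S.V)),
    Ups t (S.node l k ↑L) = fun x =>
      (∏ j : Fin L.length, Ups (L.get j).1.1 (L.get j).2 x) *
        mpderiv k (Dlist (L.map Prod.fst) (F t l)) x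

/-- Defining recursion of the raising operator `↑̂_i` on `𝕍`. -/
def RaiseSpec (raise : Fin (d+1) → S.V → (S.V →₀ ℝ)) : Prop :=
  ∀ (i : Fin (d+1)) (l : Dr) (k : MIdx d) (L : List (Odx Lp d × S.V)),
    raise i (S.node l k ↑L) =
      Finsupp.single (S.node l (k + munit i) ↑L) 1
      + ∑ j : Fin L.length, S.replace l k L j (raise i (L.get j).2)

/-- Defining recursion of the cutting operator `⋖̂*_o : 𝕍 → 𝕍 ⊗ 𝕍` (elements of
`𝕍 ⊗ 𝕍` represented as finitely supported functions on pairs of trees, a pair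
`(branch, trunk)` recording a cut). -/
def CutSpec [DecidableEq Lp] (cut : Odx Lp d → S.V → (S.V × S.V →₀ ℝ)) : Prop :=
  ∀ (t : Lp) (p : MIdx d) (l : Dr) (k : MIdx d) (L : List (Odx Lp d × S.V)),
    cut (t, p) (S.node l k ↑L) =
      (∑ j : Fin L.length,
        if (L.get j).1.1 = t ∧ (L.get j).1.2 ≤ p then
          ((mfact (p - (L.get j).1.2) : ℝ))⁻¹ •
            Finsupp.single ((L.get j).2,
              S.node l (k + (p - (L.get j).1.2)) ↑(L.eraseIdx j)) 1
        else 0)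
      + ∑ j : Fin L.length,
          (cut (t, p) (L.get j).2).sum fun ab c =>
            Finsupp.single (ab.1, S.node l k ↑(L.set j ((L.get j).1, ab.2))) c

/-- Defining recursion of the lowering operator `↑̂*_i` on `𝕍`. -/
def LowSpec (low : Fin (d+1) → S.V → (S.V →₀ ℝ)) : Prop :=
  ∀ (i : Fin (d+1)) (l : Dr) (k : MIdx d) (L : List (Odx Lp d × S.V)),
    low i (S.node l k ↑L) =
      (k i : ℝ) • Finsupp.single (S.node l (k - munit i) ↑L) 1
      + ∑ j : Fin L.length, S.replace l k L j (low i (L.get j).2)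

/-- Defining recursion of the predicate "`τ` is `𝔱`-non-vanishing for `F`". -/
def NVSpec [DecidableEq Lp] (F : Lp → Dr → FnO Lp d) (NV : Lp → S.V → Prop) : Prop :=
  ∀ (t : Lp) (l : Dr) (k : MIdx d) (L : List (Odx Lp d × S.V)),
    NV t (S.node l k ↑L) ↔
      (mpderiv k (Dlist (L.map Prod.fst) (F t l)) ≠ 0 ∧
        ∀ j : Fin L.length, NV (L.get j).1.1 (L.get j).2)

/-- The coefficient series of `U_o − u_o·𝟏`, for the jet `U` with Taylor coefficients `u`
and planted-tree coefficients `c_𝔱(τ)/S(τ)`. -/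
noncomputable def uSeries (z : Dr) (u : Odx Lp d → ℝ) (c : Lp → S.V → ℝ) (sym : S.V → ℕ)
    (o : Odx Lp d) (σ : S.V) : ℝ :=
  (∑ᶠ q : MIdx d, if q ≠ 0 ∧ σ = S.node z q 0 then u (o.1, o.2 + q) / (mfact q : ℝ) else 0) +
  ∑ᶠ τ : S.V, if σ = S.node z 0 {(o, τ)} then c o.1 τ / (sym τ : ℝ) else 0

/-- The coefficient series of the product `(U − u·𝟏)^α · Ξ_l`, expanded by multilinearity
using the commutative tree product merging the roots. -/
noncomputable def powCoef (coef : Odx Lp d → S.V → ℝ) (l : Dr) (α : Odx Lp d →₀ ℕ)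
    (σ : S.V) : ℝ :=
  ∑ᶠ g : Fin (Finsupp.toMultiset α).toList.length → S.V,
    (∏ r, coef ((Finsupp.toMultiset α).toList.get r) (g r)) *
      (if σ = S.merge l g then 1 else 0)

/-- The coefficient series of `Σ_{𝔩∈𝔇} F^𝔩_𝔱(U)·Ξ_𝔩`, where
`F^𝔩_𝔱(U)·Ξ_𝔩 = Σ_α (D^α F^𝔩_𝔱(u)/α!)·(U − u·𝟏)^α·Ξ_𝔩`. -/
noncomputable def lhsCoef [DecidableEq Lp] (F : Lp → Dr → FnO Lp d) (u : Odx Lp d → ℝ)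
    (coef : Odx Lp d → S.V → ℝ) (t : Lp) (σ : S.V) : ℝ :=
  ∑ᶠ l : Dr, ∑ᶠ α : Odx Lp d →₀ ℕ,
    Dexp α (F t l) u / (afact α : ℝ) * S.powCoef coef l α σ

/-- Defining recursion of the 𝔰-degree `|·|_𝔰` of decorated trees (with driver labels in
`𝔏₋ ⊔ {𝟎}`, encoded as `Option Lm` with `none = 𝟎`). -/
def DegSpec {Lm : Type} (S : TreeV Lp (Option Lm) d) (s : Fin (d+1) → ℝ)
    (degL : Lp → ℝ) (degLm : Lm → ℝ) (deg : S.V → ℝ) : Prop :=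
  ∀ (l : Option Lm) (k : MIdx d) (M : Multiset (Odx Lp d × S.V)),
    deg (S.node l k M) =
      l.elim 0 degLm + wdeg s k +
        ((M.map fun x => (degL x.1.1 - wdeg s x.1.2) + deg x.2).sum)

end TreeV

/-! ### The trees of `𝔅` -/

/-- Polynomial node-decoration factors `𝓘_{(𝔱,p)}[X^k]` with `p ≤ k` and `p ≠ k`;
an element is a pair `((𝔱,p), k)` subject to these constraints. -/
abbrev PolyDec (Lp : Type) (d : ℕ) :=
  {x : Odx Lp d × MIdx d // x.1.2 ≤ x.2 ∧ x.1.2 ≠ x.2}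

/-- Raise the polynomial exponent of a `PolyDec` by `e_i`. -/
def PolyDec.bump {Lp : Type} {d : ℕ} (pd : PolyDec Lp d) (i : Fin (d+1)) : PolyDec Lp d :=
  ⟨(pd.1.1, pd.1.2 + munit i), by
    constructor
    · exact fun j => le_trans (pd.2.1 j) (Nat.le_add_right _ _)
    · intro h
      have hi : pd.1.1.2 i ≤ pd.1.2 i := pd.2.1 i
      have h' : pd.1.1.2 i = pd.1.2 i + munit i i := congrFun h i
      simp only [munit, Pi.single_eq_same] at h'
      omega⟩

/-- The fresh polynomial decoration `𝓘_{(𝔱,p)}[X^{p+e_i}]`. -/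
def freshPD {Lp : Type} {d : ℕ} (o : Odx Lp d) (i : Fin (d+1)) : PolyDec Lp d :=
  ⟨(o, o.2 + munit i), by
    constructor
    · exact fun j => Nat.le_add_right _ _
    · intro h
      have h' : o.2 i = o.2 i + munit i i := congrFun h i
      simp only [munit, Pi.single_eq_same] at h'
      omega⟩

/-- Lower the polynomial exponent of a `PolyDec` by `e_i`. -/
def PolyDec.lower {Lp : Type} {d : ℕ} (pd : PolyDec Lp d) (i : Fin (d+1))
    (h : pd.1.1.2 + munit i ≤ pd.1.2) (hne : ¬ pd.1.2 - munit i = pd.1.1.2) : PolyDec Lp d :=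
  ⟨(pd.1.1, pd.1.2 - munit i), by
    constructor
    · intro j
      have hj := h j
      simp only [Pi.add_apply, Pi.sub_apply] at hj ⊢
      omega
    · exact fun hh => hne hh.symm⟩

/-- The set `𝔅` of decorated rooted trees with polynomial node decorations, presented
abstractly. -/
structure TreeB (Lp Dr : Type) (d : ℕ) where
  B : Type
  node : Dr → Multiset (PolyDec Lp d) → Multiset (Odx Lp d × B) → B
  node_bij : Function.Bijective
    (fun x : Dr × Multiset (PolyDec Lp d) × Multiset (Odx Lp d × B) => node x.1 x.2.1 x.2.2)
  ind : ∀ P : B → Prop,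
    (∀ l N (M : Multiset (Odx Lp d × B)), (∀ x ∈ M, P x.2) → P (node l N M)) → ∀ σ, P σ

namespace TreeB

variable {Lp Dr : Type} {d : ℕ} (S : TreeB Lp Dr d)

/-- Rebuild a tree after replacing the `j`-th branch by a linear combination of trees. -/
noncomputable def replace (l : Dr) (N : List (PolyDec Lp d)) (L : List (Odx Lp d × S.B))
    (j : Fin L.length) (w : S.B →₀ ℝ) : S.B →₀ ℝ :=
  w.sum fun σ' c => Finsupp.single (S.node l ↑N (↑(L.set j ((L.get j).1, σ')))) c

/-- Defining recursion of `Υ̊^F`. -/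
def UpsSpec [DecidableEq Lp] (F : Lp → Dr → FnO Lp d) (Ups : Lp → S.B → FnO Lp d) : Prop :=
  ∀ (t : Lp) (l : Dr) (N : List (PolyDec Lp d)) (L : List (Odx Lp d × S.B)),
    Ups t (S.node l ↑N ↑L) = fun x =>
      (∏ i : Fin N.length, x ((N.get i).1.1.1, (N.get i).1.2)) *
      (∏ j : Fin L.length, Ups (L.get j).1.1 (L.get j).2 x) *
      Dlist (N.map (fun pd => pd.1.1) ++ L.map Prod.fst) (F t l) x

/-- Defining recursion of the grafting operators `⋖_o` on `𝔅`. -/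
def GraftSpec (graft : Odx Lp d → S.B → S.B → (S.B →₀ ℝ)) : Prop :=
  ∀ (o : Odx Lp d) (σ' : S.B) (l : Dr) (N : List (PolyDec Lp d)) (L : List (Odx Lp d × S.B)),
    graft o σ' (S.node l ↑N ↑L) =
      Finsupp.single (S.node l ↑N ((o, σ') ::ₘ (↑L : Multiset _))) 1
      + (∑ j : Fin L.length, S.replace l N L j (graft o σ' (L.get j).2))
      + ∑ i : Fin N.length,
          (if o = ((N.get i).1.1.1, (N.get i).1.2) then
            Finsupp.single
              (S.node l ↑(N.eraseIdx i) (((N.get i).1.1, σ') ::ₘ (↑L : Multiset _))) 1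
          else 0)

/-- Defining recursion of the inner product on `𝔹`. -/
def IPSpec (ip : S.B → S.B → ℝ) : Prop :=
  ∀ (l l' : Dr) (N N' : List (PolyDec Lp d)) (L L' : List (Odx Lp d × S.B)),
    ip (S.node l ↑N ↑L) (S.node l' ↑N' ↑L') =
      (if l = l' then 1 else 0) *
      (∑ s : Fin N.length ≃ Fin N'.length,
        ∏ i : Fin N.length,
          (if (N.get i).1 = (N'.get (s i)).1 then
            (mfact ((N.get i).1.2 - (N.get i).1.1.2) : ℝ)
          else 0)) *
      ∑ s : Fin L.length ≃ Fin L'.length,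
        ∏ j : Fin L.length,
          (if (L.get j).1 = (L'.get (s j)).1 then ip (L.get j).2 (L'.get (s j)).2 else 0)

/-- Defining recursion of the raising operator `↑_i` on `𝔅`, producing a formal series
(represented by its coefficient function `𝔅 → ℝ`). -/
def RaiseSpec (raise : Fin (d+1) → S.B → (S.B → ℝ)) : Prop :=
  ∀ (i : Fin (d+1)) (l : Dr) (N : List (PolyDec Lp d)) (L : List (Odx Lp d × S.B)),
    raise i (S.node l ↑N ↑L) = fun σ'' =>
      (∑ ib : Fin N.length,
        (if σ'' = S.node l ↑(N.set ib ((N.get ib).bump i)) ↑L then 1 else 0))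
      + (if ∃ o : Odx Lp d, σ'' = S.node l (freshPD o i ::ₘ (↑N : Multiset _)) ↑L then 1 else 0)
      + ∑ j : Fin L.length,
          ∑ᶠ σ' : S.B,
            raise i (L.get j).2 σ' *
              (if σ'' = S.node l ↑N ↑(L.set j ((L.get j).1, σ')) then 1 else 0)

/-- Defining recursion of the lowering operator `↑*_i` on `𝔅`. -/
def LowSpec (low : Fin (d+1) → S.B → (S.B →₀ ℝ)) : Prop :=
  ∀ (i : Fin (d+1)) (l : Dr) (N : List (PolyDec Lp d)) (L : List (Odx Lp d × S.B)),
    low i (S.node l ↑N ↑L) =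
      (∑ ib : Fin N.length,
        (if h : (N.get ib).1.1.2 + munit i ≤ (N.get ib).1.2 then
          (((N.get ib).1.2 i - (N.get ib).1.1.2 i : ℕ) : ℝ) •
            (if he : (N.get ib).1.2 - munit i = (N.get ib).1.1.2 then
              Finsupp.single (S.node l ↑(N.eraseIdx ib) ↑L) 1
            else
              Finsupp.single (S.node l ↑(N.set ib ((N.get ib).lower i h he)) ↑L) 1)
        else 0))
      + ∑ j : Fin L.length, S.replace l N L j (low i (L.get j).2)

/-- Defining recursion of the cutting operator `⋖*_o : 𝔹 → 𝔹 ⊗ 𝔹` (elements of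
`𝔹 ⊗ 𝔹` represented as finitely supported functions on pairs of trees, a pair
`(branch, trunk)` recording a cut). -/
def CutSpec (cut : Odx Lp d → S.B → (S.B × S.B →₀ ℝ)) : Prop :=
  ∀ (t : Lp) (p : MIdx d) (l : Dr) (N : List (PolyDec Lp d)) (L : List (Odx Lp d × S.B)),
    cut (t, p) (S.node l ↑N ↑L) =
      (∑ j : Fin L.length,
        (if hc : (L.get j).1.1 = t ∧ (L.get j).1.2 ≤ p then
          ((mfact (p - (L.get j).1.2) : ℝ))⁻¹ •
            Finsupp.single ((L.get j).2,
              S.node l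
                (if he : (L.get j).1.2 = p then (↑N : Multiset (PolyDec Lp d))
                 else (⟨((L.get j).1, p), hc.2, he⟩ ::ₘ (↑N : Multiset (PolyDec Lp d))))
                ↑(L.eraseIdx j)) 1
        else 0))
      + ∑ j : Fin L.length,
          (cut (t, p) (L.get j).2).sum fun ab c =>
            Finsupp.single (ab.1, S.node l ↑N ↑(L.set j ((L.get j).1, ab.2))) c

end TreeB

/-- Defining recursion of the map `Q : 𝔹 → 𝕍` collapsing polynomial decorations. -/
def QSpec {Lp Dr : Type} {d : ℕ} (SB : TreeB Lp Dr d) (SV : TreeV Lp Dr d)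
    (Qf : SB.B → SV.V) : Prop :=
  ∀ (l : Dr) (N : Multiset (PolyDec Lp d)) (M : Multiset (Odx Lp d × SB.B)),
    Qf (SB.node l N M) =
      SV.node l ((N.map fun pd => pd.1.2 - pd.1.1.2).sum) (M.map fun x => (x.1, Qf x.2))

/-- The generic summand of the multivariate Faà di Bruno formula, indexed by `(r, q⃗, m⃗)`;
it vanishes unless `(q⃗, m⃗) ∈ I(r,k)`. -/
noncomputable def fdbSummand {Lp : Type} {d : ℕ} [DecidableEq Lp] (lo : LinearOrder (MIdx d))
    (F : FnO Lp d) (k : MIdx d)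
    (p : Σ r : ℕ, (Fin r → MIdx d) × (Fin r → (Odx Lp d →₀ ℕ))) : FnO Lp d :=
  if (∀ j, p.2.2 j ≠ 0) ∧ (∀ j j' : Fin p.1, j < j' → lo.lt (p.2.1 j) (p.2.1 j')) ∧
      (∀ j, lo.lt 0 (p.2.1 j)) ∧ (∑ j, ((p.2.2 j).sum fun _ n => n) • p.2.1 j) = k then
    fun x =>
      (∏ j, (p.2.2 j).prod fun o n =>
        (x (o.1, o.2 + p.2.1 j) / (mfact (p.2.1 j) : ℝ)) ^ n / (Nat.factorial n : ℝ)) *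
        Dexp (∑ j, p.2.2 j) F x
  else 0

/-! ### Generic decorated trees -/

/-- Decorated rooted trees over node species `N` and edge species `E`,
presented abstractly. -/
structure GTree (N E : Type) where
  T : Type
  node : N → Multiset (E × T) → T
  node_bij : Function.Bijective (fun x : N × Multiset (E × T) => node x.1 x.2)
  ind : ∀ P : T → Prop, (∀ Y M, (∀ x ∈ M, P x.2) → P (node Y M)) → ∀ τ, P τ

namespace GTree

/-- Multilinear expansion of a list of edge-decorated linear combinations of trees into a
linear combination of branch multisets. -/
noncomputable def expandAux {N E : Type} (S : GTree N E) :
    List (E × (S.T →₀ ℝ)) → (Multiset (E × S.T) →₀ ℝ)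
  | [] => Finsupp.single 0 1
  | (e, w) :: L =>
      w.sum fun τ' c => (S.expandAux L).sum fun M c' => Finsupp.single ((e, τ') ::ₘ M) (c * c')

/-- Defining recursion of the functorial extension `𝔗(A)` of a linear map `A` between
the free vector spaces on the node species. -/
def MapSpec {N N' E : Type} (S : GTree N E) (S' : GTree N' E)
    (A : N → (N' →₀ ℝ)) (TA : S.T → (S'.T →₀ ℝ)) : Prop :=
  ∀ (Y : N) (L : List (E × S.T)),
    TA (S.node Y ↑L) =
      (A Y).sum fun Y' c =>
        (S'.expandAux (L.map fun x => (x.1, TA x.2))).sum fun M c' =>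
          Finsupp.single (S'.node Y' M) (c * c')

/-- Defining recursion of the inner product on `𝔗(𝖭,𝖤)` induced by an inner product on
the node species. -/
def IPSpec {N E : Type} (S : GTree N E) (ipN : N → N → ℝ) (ip : S.T → S.T → ℝ) : Prop :=
  ∀ (Y Y' : N) (L L' : List (E × S.T)),
    ip (S.node Y ↑L) (S.node Y' ↑L') =
      ipN Y Y' * ∑ s : Fin L.length ≃ Fin L'.length,
        ∏ j : Fin L.length,
          (if (L.get j).1 = (L'.get (s j)).1 then ip (L.get j).2 (L'.get (s j)).2 else 0)

end GTree

/-!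
At a node, `Υ̊^F` is the product of three factors: the coordinates `𝒳_{(𝔱,k)}` recorded by the
polynomial decorations, the values of `Υ̊^F` on the branches, and a partial derivative
`D_{o₁} ⋯ D_{oₙ} F^𝔩_𝔱`. Since `F^𝔩_𝔱 ∈ 𝒫` is smooth and depends on finitely many coordinates,
so are all three factors, and `∂_l` acts on their product by the Leibniz rule. On a coordinate it
raises `k` to `k + e_l`, which is the first sum in `↑_l σ`; on the derivative of `F` it gives
`Σ_o 𝒳_{o+e_l} D_o(⋯)`, which is the second sum, and only the finitely many coordinates `o` on
which the derivative depends contribute; on a branch it is the induction hypothesis, which is the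
third sum. Grafting a new decoration or a new branch is injective, so pairing the formal series
`↑_l σ` with `Υ̊^F` reindexes exactly onto these sums.
-/

section SmoothIn

variable {Lp : Type} {d : ℕ}

def SmoothIn (s : Finset (Odx Lp d)) (F : FnO Lp d) : Prop :=
  ∃ g : (↥s → ℝ) → ℝ, ContDiff ℝ (⊤ : ℕ∞) g ∧ ∀ x, F x = g fun o => x o.1

theorem isSmoothCO_iff {F : FnO Lp d} : IsSmoothCO F ↔ ∃ s, SmoothIn s F := Iff.rfl

theorem SmoothIn.mono {s s' : Finset (Odx Lp d)} {F : FnO Lp d} (hss : s ⊆ s')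
    (hF : SmoothIn s F) : SmoothIn s' F := by
  obtain ⟨g, hg, hFg⟩ := hF
  exact ⟨fun y => g fun o => y ⟨o.1, hss o.2⟩,
    hg.comp (contDiff_pi.2 fun o => contDiff_apply ℝ ℝ _), hFg⟩

theorem SmoothIn.mul {s : Finset (Odx Lp d)} {F G : FnO Lp d} (hF : SmoothIn s F)
    (hG : SmoothIn s G) : SmoothIn s fun x => F x * G x := by
  obtain ⟨g, hg, hFg⟩ := hF
  obtain ⟨g', hg', hGg⟩ := hG
  exact ⟨fun y => g y * g' y, hg.mul hg', fun x => by simp only [hFg, hGg]⟩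

theorem SmoothIn.add {s : Finset (Odx Lp d)} {F G : FnO Lp d} (hF : SmoothIn s F)
    (hG : SmoothIn s G) : SmoothIn s fun x => F x + G x := by
  obtain ⟨g, hg, hFg⟩ := hF
  obtain ⟨g', hg', hGg⟩ := hG
  exact ⟨fun y => g y + g' y, hg.add hg', fun x => by simp only [hFg, hGg]⟩

theorem smoothIn_Xpow (α : Odx Lp d →₀ ℕ) : SmoothIn α.support (Xpow α) :=
  ⟨fun y => ∏ o : ↥α.support, y o ^ α o.1,
    contDiff_prod fun o _ => (contDiff_apply ℝ ℝ o).pow _,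
    fun x => by rw [Xpow, Finsupp.prod, ← Finset.prod_coe_sort]⟩

variable [DecidableEq Lp]

theorem restrict_update_of_mem {s : Finset (Odx Lp d)} (x : Odx Lp d → ℝ) {o : Odx Lp d}
    (ho : o ∈ s) (t : ℝ) :
    (fun o' : ↥s => Function.update x o t o'.1) =
      Function.update (fun o' : ↥s => x o'.1) ⟨o, ho⟩ t := by
  funext o'
  simp only [Function.update_apply, Subtype.ext_iff]

theorem restrict_update_of_notMem {s : Finset (Odx Lp d)} (x : Odx Lp d → ℝ) {o : Odx Lp d}
    (ho : o ∉ s) (t : ℝ) :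
    (fun o' : ↥s => Function.update x o t o'.1) = fun o' : ↥s => x o'.1 := by
  funext o'
  exact Function.update_of_ne (fun h : o'.1 = o => ho (h ▸ o'.2)) _ _

theorem SmoothIn.differentiable_update {s : Finset (Odx Lp d)} {F : FnO Lp d}
    (hF : SmoothIn s F) (x : Odx Lp d → ℝ) (o : Odx Lp d) :
    Differentiable ℝ fun t => F (Function.update x o t) := by
  obtain ⟨g, hg, hFg⟩ := hF
  simp only [hFg]
  refine (hg.differentiable (by simp)).comp (differentiable_pi.2 fun o' => ?_)
  simp only [Function.update_apply]
  split_ifs <;> fun_prop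

theorem SmoothIn.hasDerivAt_dpart {s : Finset (Odx Lp d)} {F : FnO Lp d} (hF : SmoothIn s F)
    (x : Odx Lp d → ℝ) (o : Odx Lp d) :
    HasDerivAt (fun t => F (Function.update x o t)) (Dpart o F x) (x o) :=
  (hF.differentiable_update x o (x o)).hasDerivAt

theorem SmoothIn.dpart_eq_zero {s : Finset (Odx Lp d)} {F : FnO Lp d} (hF : SmoothIn s F)
    {o : Odx Lp d} (ho : o ∉ s) : Dpart o F = 0 := by
  obtain ⟨g, -, hFg⟩ := hF
  funext x
  simp only [Dpart, hFg, restrict_update_of_notMem x ho, deriv_const, Pi.zero_apply]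

theorem SmoothIn.dpart {s : Finset (Odx Lp d)} {F : FnO Lp d} (hF : SmoothIn s F)
    (o : Odx Lp d) : SmoothIn s (Dpart o F) := by
  by_cases ho : o ∈ s
  · obtain ⟨g, hg, hFg⟩ := hF
    refine ⟨fun y => fderiv ℝ g y (Pi.single ⟨o, ho⟩ 1),
      (hg.fderiv_right (m := (⊤ : ℕ∞)) (by exact_mod_cast le_top)).clm_apply contDiff_const,
      fun x => ?_⟩
    have hupd : HasDerivAt (fun t => (fun o' : ↥s => Function.update x o t o'.1))
        (Pi.single ⟨o, ho⟩ 1) (x o) := by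
      rw [show (fun t => fun o' : ↥s => Function.update x o t o'.1) = _ from
        funext (restrict_update_of_mem x ho)]
      exact hasDerivAt_update _ _ _
    have hcomp := ((hg.differentiable (by simp)) _).hasFDerivAt.comp_hasDerivAt (x o) hupd
    simp only [Function.update_eq_self] at hcomp
    simp only [Dpart, hFg]
    exact hcomp.deriv
  · rw [hF.dpart_eq_zero ho]
    exact ⟨fun _ => 0, contDiff_const, fun _ => rfl⟩

end SmoothIn

section IsSmoothCO

variable {Lp : Type} {d : ℕ}

theorem isSmoothCO_const (c : ℝ) : IsSmoothCO fun _ : Odx Lp d → ℝ => c :=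
  ⟨∅, fun _ => c, contDiff_const, fun _ => rfl⟩

theorem isSmoothCO_Xc (o : Odx Lp d) : IsSmoothCO (Xc o) :=
  ⟨{o}, fun y => y ⟨o, Finset.mem_singleton_self o⟩, contDiff_apply ℝ ℝ _, fun _ => rfl⟩

theorem IsSmoothCO.mul {F G : FnO Lp d} (hF : IsSmoothCO F) (hG : IsSmoothCO G) :
    IsSmoothCO fun x => F x * G x := by
  obtain ⟨s, hs⟩ := isSmoothCO_iff.1 hF
  obtain ⟨s', hs'⟩ := isSmoothCO_iff.1 hG
  exact isSmoothCO_iff.2 ⟨s ∪ s',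
    (hs.mono Finset.subset_union_left).mul (hs'.mono Finset.subset_union_right)⟩

theorem IsSmoothCO.add {F G : FnO Lp d} (hF : IsSmoothCO F) (hG : IsSmoothCO G) :
    IsSmoothCO fun x => F x + G x := by
  obtain ⟨s, hs⟩ := isSmoothCO_iff.1 hF
  obtain ⟨s', hs'⟩ := isSmoothCO_iff.1 hG
  exact isSmoothCO_iff.2 ⟨s ∪ s',
    (hs.mono Finset.subset_union_left).add (hs'.mono Finset.subset_union_right)⟩

theorem isSmoothCO_finset_prod {ι : Type*} (u : Finset ι) {H : ι → FnO Lp d}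
    (h : ∀ j ∈ u, IsSmoothCO (H j)) : IsSmoothCO fun x => ∏ j ∈ u, H j x := by
  induction u using Finset.induction_on with
  | empty => simpa using isSmoothCO_const (Lp := Lp) (d := d) 1
  | insert a u ha ih =>
    simp only [Finset.prod_insert ha]
    exact (h a (Finset.mem_insert_self a u)).mul
      (ih fun j hj => h j (Finset.mem_insert_of_mem hj))

theorem isSmoothCO_finset_sum {ι : Type*} (u : Finset ι) {H : ι → FnO Lp d}
    (h : ∀ j ∈ u, IsSmoothCO (H j)) : IsSmoothCO fun x => ∑ j ∈ u, H j x := by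
  induction u using Finset.induction_on with
  | empty => simpa using isSmoothCO_const (Lp := Lp) (d := d) 0
  | insert a u ha ih =>
    simp only [Finset.sum_insert ha]
    exact (h a (Finset.mem_insert_self a u)).add
      (ih fun j hj => h j (Finset.mem_insert_of_mem hj))

theorem IsP.isSmoothCO {Om Op : Set (Odx Lp d)} {F : FnO Lp d} (hF : IsP Om Op F) :
    IsSmoothCO F := by
  obtain ⟨m, α, G, -, -, hG, -, -, rfl⟩ := hF
  exact isSmoothCO_finset_sum _ fun j _ =>
    (hG j).mul (isSmoothCO_iff.2 ⟨_, smoothIn_Xpow (α j)⟩)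

variable [DecidableEq Lp]

theorem IsSmoothCO.dpart {F : FnO Lp d} (hF : IsSmoothCO F) (o : Odx Lp d) :
    IsSmoothCO (Dpart o F) :=
  let ⟨s, hs⟩ := isSmoothCO_iff.1 hF
  isSmoothCO_iff.2 ⟨s, hs.dpart o⟩

theorem IsSmoothCO.dlist {F : FnO Lp d} (hF : IsSmoothCO F) (L : List (Odx Lp d)) :
    IsSmoothCO (Dlist L F) := by
  induction L with
  | nil => exact hF
  | cons o L ih => exact ih.dpart o

theorem IsSmoothCO.finite_support_dpart {F : FnO Lp d} (hF : IsSmoothCO F) :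
    (Function.support fun o => Dpart o F).Finite := by
  obtain ⟨s, hs⟩ := isSmoothCO_iff.1 hF
  refine s.finite_toSet.subset fun o ho => ?_
  by_contra hos
  exact ho (hs.dpart_eq_zero hos)

theorem IsSmoothCO.dpart_mul {F G : FnO Lp d} (hF : IsSmoothCO F) (hG : IsSmoothCO G)
    (o : Odx Lp d) :
    Dpart o (fun x => F x * G x) = fun x => Dpart o F x * G x + F x * Dpart o G x := by
  obtain ⟨s, hs⟩ := isSmoothCO_iff.1 hF
  obtain ⟨s', hs'⟩ := isSmoothCO_iff.1 hG
  funext x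
  have h := (hs.hasDerivAt_dpart x o).mul (hs'.hasDerivAt_dpart x o)
  simp only [Function.update_eq_self] at h
  exact h.deriv

theorem dpart_const (c : ℝ) (o : Odx Lp d) : Dpart o (fun _ : Odx Lp d → ℝ => c) = 0 := by
  funext x
  simp [Dpart]

theorem dpart_Xc (o o' : Odx Lp d) : Dpart o (Xc o') = fun _ => if o' = o then 1 else 0 := by
  funext x
  by_cases h : o' = o
  · subst h
    simp [Dpart, Xc]
  · simp [Dpart, Xc, h]

theorem pderivO_const (c : ℝ) (i : Fin (d+1)) :
    pderivO i (fun _ : Odx Lp d → ℝ => c) = fun _ => 0 := by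
  funext x
  simp [pderivO, dpart_const]

theorem pderivO_Xc (o : Odx Lp d) (i : Fin (d+1)) :
    pderivO i (Xc o) = Xc (o.1, o.2 + munit i) := by
  funext x
  rw [pderivO, finsum_eq_single _ o fun o' ho' => by simp [dpart_Xc, Ne.symm ho']]
  simp [dpart_Xc]

theorem pderivO_mul {F G : FnO Lp d} (hF : IsSmoothCO F) (hG : IsSmoothCO G) (i : Fin (d+1)) :
    pderivO i (fun x => F x * G x) = fun x => pderivO i F x * G x + F x * pderivO i G x := by
  funext x
  have hfin : ∀ {H : FnO Lp d}, IsSmoothCO H →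
      (Function.support fun o => Xc (o.1, o.2 + munit i) x * Dpart o H x).Finite :=
    fun hH => hH.finite_support_dpart.subset fun o ho h0 => ho (by simp [h0])
  simp only [pderivO, hF.dpart_mul hG]
  rw [finsum_mul, mul_finsum, ← finsum_add_distrib
    ((hfin hF).subset (Function.support_mul_subset_left _ _))
    ((hfin hG).subset (Function.support_mul_subset_right _ _))]
  exact finsum_congr fun o => by ring

theorem pderivO_finset_prod {ι : Type*} [DecidableEq ι] (u : Finset ι) {H : ι → FnO Lp d}
    (h : ∀ j ∈ u, IsSmoothCO (H j)) (i : Fin (d+1)) :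
    pderivO i (fun x => ∏ j ∈ u, H j x) =
      fun x => ∑ j ∈ u, pderivO i (H j) x * ∏ j' ∈ u.erase j, H j' x := by
  induction u using Finset.induction_on with
  | empty => simpa using pderivO_const (Lp := Lp) (d := d) 1 i
  | insert a u ha ih =>
    have hu : ∀ j ∈ u, IsSmoothCO (H j) := fun j hj => h j (Finset.mem_insert_of_mem hj)
    simp only [Finset.prod_insert ha]
    rw [pderivO_mul (h a (Finset.mem_insert_self a u)) (isSmoothCO_finset_prod u hu), ih hu]
    funext x
    rw [Finset.sum_insert ha, Finset.erase_insert ha, Finset.mul_sum]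
    congr 1
    refine Finset.sum_congr rfl fun j hj => ?_
    rw [Finset.erase_insert_of_ne (fun h : a = j => ha (h ▸ hj)),
      Finset.prod_insert fun h => ha (Finset.mem_of_mem_erase h)]
    ring

end IsSmoothCO

section Finsum

variable {ι α β R : Type*}

theorem finsum_comp_of_support_subset_range [AddCommMonoid R] {f : α → β}
    (hf : Function.Injective f) {h : β → R} (hs : Function.support h ⊆ Set.range f) :
    ∑ᶠ a, h (f a) = ∑ᶠ b, h b := by
  rw [← finsum_mem_range hf, ← finsum_mem_inter_support, Set.inter_eq_right.2 hs,
    finsum_mem_support]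

variable [Semiring R]

theorem finsum_sum_ite_eq_mul (u : Finset ι) (a : ι → β) (g : β → R) :
    ∑ᶠ b, (∑ j ∈ u, if b = a j then (1 : R) else 0) * g b = ∑ j ∈ u, g (a j) := by
  simp only [Finset.sum_mul, ite_mul, one_mul, zero_mul]
  rw [finsum_sum_comm _ _ fun j _ => (Set.finite_singleton (a j)).subset fun b hb => by
    by_contra h
    exact hb (if_neg h)]
  refine Finset.sum_congr rfl fun j _ => ?_
  rw [finsum_eq_single _ (a j) fun b hb => if_neg hb, if_pos rfl]

theorem finsum_exists_ite_mul {f : α → β} (hf : Function.Injective f) (g : β → R) :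
    ∑ᶠ b, (if ∃ a, b = f a then (1 : R) else 0) * g b = ∑ᶠ a, g (f a) := by
  rw [← finsum_comp_of_support_subset_range hf]
  · simp
  · intro b hb
    by_contra h
    exact hb (by simp only [Set.mem_range, eq_comm] at h; simp [h])

theorem finsum_mul_ite_apply_eq {f : α → β} (hf : Function.Injective f) (c : α → R) (a : α) :
    ∑ᶠ a', c a' * (if f a = f a' then (1 : R) else 0) = c a := by
  rw [finsum_eq_single _ a fun a' ha' => by simp [hf.ne (Ne.symm ha')]]
  simp

theorem support_finsum_mul_ite_subset {f : α → β} (hf : Function.Injective f) (c : α → R) :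
    Function.support (fun b => ∑ᶠ a, c a * if b = f a then (1 : R) else 0) ⊆
      f '' Function.support c := by
  intro b hb
  by_cases hrange : ∃ a, b = f a
  · obtain ⟨a, rfl⟩ := hrange
    rw [Function.mem_support, finsum_mul_ite_apply_eq hf] at hb
    exact ⟨a, hb, rfl⟩
  · push Not at hrange
    simp [hrange] at hb

theorem finsum_finsum_mul_ite_mul {f : α → β} (hf : Function.Injective f) (c : α → R)
    (g : β → R) :
    ∑ᶠ b, (∑ᶠ a, c a * if b = f a then (1 : R) else 0) * g b = ∑ᶠ a, c a * g (f a) := by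
  rw [← finsum_comp_of_support_subset_range hf]
  · simp only [finsum_mul_ite_apply_eq hf]
  · exact (Function.support_mul_subset_left _ _).trans
      ((support_finsum_mul_ite_subset hf c).trans (Set.image_subset_range _ _))

end Finsum

section ListLemmas

variable {α β M : Type*}

theorem List.map_set_of_apply_eq {f : α → β} {l : List α} {j : ℕ} (hj : j < l.length) {a : α}
    (h : f a = f l[j]) : (l.set j a).map f = l.map f := by
  rw [List.map_set, h, ← List.getElem_map f (h := by simpa using hj)]
  exact List.set_getElem_self _

theorem List.coe_set_injective (l : List α) {j : ℕ} (hj : j < l.length) :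
    Function.Injective fun a => (↑(l.set j a) : Multiset α) := by
  intro a b h
  simp only [List.set_eq_take_cons_drop _ hj, ← Multiset.coe_add, ← Multiset.cons_coe] at h
  exact (Multiset.cons_inj_left _).1 (add_left_cancel h)

theorem prod_univ_get_set [CommMonoid M] (l : List α) (j : Fin l.length) (a : α) (f : α → M) :
    ∏ i : Fin (l.set j a).length, f ((l.set j a).get i) =
      f a * ∏ i ∈ Finset.univ.erase j, f (l.get i) := by
  rw [Fintype.prod_equiv (finCongr List.length_set) _ (fun i => f (if j = i then a else l.get i))
      fun i => by simp [List.getElem_set, Fin.ext_iff],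
    ← Finset.mul_prod_erase _ _ (Finset.mem_univ j), if_pos rfl]
  exact congrArg _ (Finset.prod_congr rfl fun i hi => by
    rw [if_neg (Finset.ne_of_mem_erase hi).symm])

theorem prod_univ_get_cons [CommMonoid M] (a : α) (l : List α) (f : α → M) :
    ∏ i : Fin (a :: l).length, f ((a :: l).get i) = f a * ∏ i : Fin l.length, f (l.get i) :=
  Fin.prod_univ_succ _

end ListLemmas

namespace TreeB

variable {Lp Dr : Type} {d : ℕ} (S : TreeB Lp Dr d)

theorem node_inj {l l' : Dr} {N N' : Multiset (PolyDec Lp d)}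
    {M M' : Multiset (Odx Lp d × S.B)} :
    S.node l N M = S.node l' N' M' ↔ l = l' ∧ N = N' ∧ M = M' := by
  refine ⟨fun h => ?_, fun ⟨hl, hN, hM⟩ => hl ▸ hN ▸ hM ▸ rfl⟩
  simpa only [Prod.mk.injEq] using S.node_bij.injective (a₁ := (l, N, M)) (a₂ := (l', N', M')) h

theorem ind_list {P : S.B → Prop}
    (node : ∀ l (N : List (PolyDec Lp d)) (L : List (Odx Lp d × S.B)),
      (∀ j : Fin L.length, P (L.get j).2) → P (S.node l ↑N ↑L))
    (σ : S.B) : P σ := by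
  refine S.ind P (fun l N M hM => ?_) σ
  obtain ⟨N, rfl⟩ : ∃ N₀ : List (PolyDec Lp d), (↑N₀ : Multiset _) = N := ⟨N.toList, N.coe_toList⟩
  obtain ⟨L, rfl⟩ : ∃ L₀ : List (Odx Lp d × S.B), (↑L₀ : Multiset _) = M := ⟨M.toList, M.coe_toList⟩
  exact node l N L fun j => hM _ (Multiset.mem_coe.2 (List.get_mem L j))

section Raise

variable (l : Dr) (N : List (PolyDec Lp d)) (L : List (Odx Lp d × S.B)) (i : Fin (d+1))

def bumpAt (ib : Fin N.length) : S.B :=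
  S.node l ↑(N.set ib ((N.get ib).bump i)) ↑L

def addFresh (o : Odx Lp d) : S.B :=
  S.node l (freshPD o i ::ₘ ↑N) ↑L

def replaceBranch (j : Fin L.length) (σ' : S.B) : S.B :=
  S.node l ↑N ↑(L.set j ((L.get j).1, σ'))

noncomputable def bumpSeries : S.B → ℝ :=
  fun σ => ∑ ib, if σ = S.bumpAt l N L i ib then 1 else 0

noncomputable def freshSeries : S.B → ℝ :=
  fun σ => if ∃ o, σ = S.addFresh l N L i o then 1 else 0

noncomputable def replaceSeries (j : Fin L.length) (c : S.B → ℝ) : S.B → ℝ :=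
  fun σ => ∑ᶠ σ', c σ' * if σ = S.replaceBranch l N L j σ' then 1 else 0

theorem addFresh_injective : Function.Injective (S.addFresh l N L i) := fun _ _ h =>
  congrArg (fun pd : PolyDec Lp d => pd.1.1) ((Multiset.cons_inj_left _).1 (S.node_inj.1 h).2.1)

theorem replaceBranch_injective (j : Fin L.length) :
    Function.Injective (S.replaceBranch l N L j) := fun _ _ h =>
  congrArg Prod.snd (List.coe_set_injective L j.2 (S.node_inj.1 h).2.2)

theorem finite_support_bumpSeries : (Function.support (S.bumpSeries l N L i)).Finite :=
  (Set.finite_range (S.bumpAt l N L i)).subset fun σ hσ => by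
    obtain ⟨ib, -, hib⟩ := Finset.exists_ne_zero_of_sum_ne_zero hσ
    by_contra h
    exact hib (if_neg fun he => h ⟨ib, he.symm⟩)

variable {l N L i}

theorem RaiseSpec.apply_node {raise : Fin (d+1) → S.B → (S.B → ℝ)} (hraise : S.RaiseSpec raise)
    (σ : S.B) :
    raise i (S.node l ↑N ↑L) σ = S.bumpSeries l N L i σ + S.freshSeries l N L i σ +
      ∑ j, S.replaceSeries l N L j (raise i (L.get j).2) σ := by
  rw [hraise i l N L]
  rfl

end Raise

end TreeB

section Factors

variable {Lp Dr β : Type} {d : ℕ}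

noncomputable def polyFactor (N : List (PolyDec Lp d)) : FnO Lp d :=
  fun x => ∏ ib : Fin N.length, x ((N.get ib).1.1.1, (N.get ib).1.2)

noncomputable def branchFactor (U : Lp → β → FnO Lp d) (L : List (Odx Lp d × β)) : FnO Lp d :=
  fun x => ∏ j : Fin L.length, U (L.get j).1.1 (L.get j).2 x

theorem isSmoothCO_polyFactor (N : List (PolyDec Lp d)) : IsSmoothCO (polyFactor N) :=
  isSmoothCO_finset_prod _ fun _ _ => isSmoothCO_Xc _

theorem isSmoothCO_branchFactor {U : Lp → β → FnO Lp d} {L : List (Odx Lp d × β)}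
    (hU : ∀ j : Fin L.length, IsSmoothCO (U (L.get j).1.1 (L.get j).2)) :
    IsSmoothCO (branchFactor U L) :=
  isSmoothCO_finset_prod _ fun j _ => hU j

variable [DecidableEq Lp]

noncomputable def nodeDeriv (F : Lp → Dr → FnO Lp d) (t : Lp) (l : Dr) (N : List (PolyDec Lp d))
    (L : List (Odx Lp d × β)) : FnO Lp d :=
  Dlist (N.map (fun pd => pd.1.1) ++ L.map Prod.fst) (F t l)

theorem isSmoothCO_nodeDeriv {F : Lp → Dr → FnO Lp d} (hF : ∀ t l, IsSmoothCO (F t l)) (t : Lp)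
    (l : Dr) (N : List (PolyDec Lp d)) (L : List (Odx Lp d × β)) :
    IsSmoothCO (nodeDeriv F t l N L) :=
  (hF t l).dlist _

theorem pderivO_polyFactor (N : List (PolyDec Lp d)) (i : Fin (d+1)) :
    pderivO i (polyFactor N) = fun x => ∑ ib : Fin N.length,
      x ((N.get ib).1.1.1, (N.get ib).1.2 + munit i) *
        ∏ ib' ∈ Finset.univ.erase ib, x ((N.get ib').1.1.1, (N.get ib').1.2) := by
  unfold polyFactor
  simpa only [pderivO_Xc, Xc] using
    pderivO_finset_prod Finset.univ (fun ib _ => isSmoothCO_Xc ((N.get ib).1.1.1, (N.get ib).1.2)) i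

theorem pderivO_branchFactor {U : Lp → β → FnO Lp d} {L : List (Odx Lp d × β)}
    (hU : ∀ j : Fin L.length, IsSmoothCO (U (L.get j).1.1 (L.get j).2)) (i : Fin (d+1)) :
    pderivO i (branchFactor U L) = fun x => ∑ j : Fin L.length,
      pderivO i (U (L.get j).1.1 (L.get j).2) x *
        ∏ j' ∈ Finset.univ.erase j, U (L.get j').1.1 (L.get j').2 x :=
  pderivO_finset_prod Finset.univ (fun j _ => hU j) i

end Factors

namespace TreeB

variable {Lp Dr : Type} {d : ℕ} [DecidableEq Lp] {S : TreeB Lp Dr d}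
  {F : Lp → Dr → FnO Lp d} {UpsB : Lp → S.B → FnO Lp d} {l : Dr} {N : List (PolyDec Lp d)}
  {L : List (Odx Lp d × S.B)} {i : Fin (d+1)}

namespace UpsSpec

theorem apply_node (hUps : S.UpsSpec F UpsB) (t : Lp) (l : Dr) (N : List (PolyDec Lp d))
    (L : List (Odx Lp d × S.B)) (x : Odx Lp d → ℝ) :
    UpsB t (S.node l ↑N ↑L) x = polyFactor N x * branchFactor UpsB L x * nodeDeriv F t l N L x := by
  rw [hUps]
  rfl

theorem apply_bumpAt (hUps : S.UpsSpec F UpsB) (t : Lp) (ib : Fin N.length) (x : Odx Lp d → ℝ) :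
    UpsB t (S.bumpAt l N L i ib) x =
      x ((N.get ib).1.1.1, (N.get ib).1.2 + munit i) *
        (∏ ib' ∈ Finset.univ.erase ib, x ((N.get ib').1.1.1, (N.get ib').1.2)) *
        branchFactor UpsB L x * nodeDeriv F t l N L x := by
  rw [bumpAt, hUps]
  beta_reduce
  rw [prod_univ_get_set N ib _ fun pd => x (pd.1.1.1, pd.1.2),
    List.map_set_of_apply_eq (f := fun pd : PolyDec Lp d => pd.1.1)
      (a := (N.get ib).bump i) ib.2 rfl]
  rfl

theorem apply_addFresh (hUps : S.UpsSpec F UpsB) (t : Lp) (o : Odx Lp d) (x : Odx Lp d → ℝ) :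
    UpsB t (S.addFresh l N L i o) x = x (o.1, o.2 + munit i) *
      (polyFactor N x * branchFactor UpsB L x * Dpart o (nodeDeriv F t l N L) x) := by
  rw [addFresh, Multiset.cons_coe, hUps]
  beta_reduce
  rw [prod_univ_get_cons (freshPD o i) N fun pd => x (pd.1.1.1, pd.1.2)]
  show x (o.1, o.2 + munit i) * polyFactor N x * branchFactor UpsB L x *
    Dpart o (nodeDeriv F t l N L) x = _
  ring

theorem apply_replaceBranch (hUps : S.UpsSpec F UpsB) (t : Lp) (j : Fin L.length) (σ' : S.B)
    (x : Odx Lp d → ℝ) :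
    UpsB t (S.replaceBranch l N L j σ') x = polyFactor N x *
      (UpsB (L.get j).1.1 σ' x * ∏ j' ∈ Finset.univ.erase j, UpsB (L.get j').1.1 (L.get j').2 x) *
      nodeDeriv F t l N L x := by
  rw [replaceBranch, hUps]
  beta_reduce
  rw [prod_univ_get_set L j _ fun e => UpsB e.1.1 e.2 x,
    List.map_set_of_apply_eq (f := Prod.fst) (a := ((L.get j).1, σ')) j.2 rfl]
  rfl

theorem dpart_ne_zero_of_addFresh (hUps : S.UpsSpec F UpsB) {t : Lp} {o : Odx Lp d}
    (h : UpsB t (S.addFresh l N L i o) ≠ 0) : Dpart o (nodeDeriv F t l N L) ≠ 0 :=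
  fun h0 => h (funext fun x => by simp [hUps.apply_addFresh, h0])

theorem ne_zero_of_replaceBranch (hUps : S.UpsSpec F UpsB) {t : Lp} {j : Fin L.length}
    {σ' : S.B} (h : UpsB t (S.replaceBranch l N L j σ') ≠ 0) : UpsB (L.get j).1.1 σ' ≠ 0 :=
  fun h0 => h (funext fun x => by rw [hUps.apply_replaceBranch, h0]; simp)

theorem isSmoothCO (hUps : S.UpsSpec F UpsB) (hF : ∀ t l, IsSmoothCO (F t l)) (σ : S.B)
    (t : Lp) : IsSmoothCO (UpsB t σ) := by
  induction σ using S.ind_list generalizing t with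
  | node l N L ih =>
    rw [show UpsB t (S.node l ↑N ↑L) = _ from funext (hUps.apply_node t l N L)]
    exact ((isSmoothCO_polyFactor N).mul (isSmoothCO_branchFactor fun j => ih j _)).mul
      (isSmoothCO_nodeDeriv hF t l N L)

theorem finsum_apply_addFresh (hUps : S.UpsSpec F UpsB) (t : Lp) (x : Odx Lp d → ℝ) :
    ∑ᶠ o, UpsB t (S.addFresh l N L i o) x =
      polyFactor N x * branchFactor UpsB L x * pderivO i (nodeDeriv F t l N L) x := by
  simp only [hUps.apply_addFresh, pderivO, Xc, mul_finsum]
  exact finsum_congr fun o => by ring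

theorem pderivO_apply_node (hUps : S.UpsSpec F UpsB) (hF : ∀ t l, IsSmoothCO (F t l)) (t : Lp)
    (x : Odx Lp d → ℝ) :
    pderivO i (UpsB t (S.node l ↑N ↑L)) x =
      ∑ ib, UpsB t (S.bumpAt l N L i ib) x + ∑ᶠ o, UpsB t (S.addFresh l N L i o) x +
        ∑ j, polyFactor N x * (pderivO i (UpsB (L.get j).1.1 (L.get j).2) x *
          ∏ j' ∈ Finset.univ.erase j, UpsB (L.get j').1.1 (L.get j').2 x) *
          nodeDeriv F t l N L x := by
  have hA := isSmoothCO_polyFactor N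
  have hU : ∀ j : Fin L.length, IsSmoothCO (UpsB (L.get j).1.1 (L.get j).2) :=
    fun j => hUps.isSmoothCO hF _ _
  have hB := isSmoothCO_branchFactor hU
  rw [show UpsB t (S.node l ↑N ↑L) = _ from funext (hUps.apply_node t l N L),
    pderivO_mul (hA.mul hB) (isSmoothCO_nodeDeriv hF t l N L), pderivO_mul hA hB,
    pderivO_polyFactor, pderivO_branchFactor hU, hUps.finsum_apply_addFresh]
  simp only [hUps.apply_bumpAt, Finset.sum_mul, Finset.mul_sum, add_mul]
  ring

theorem finite_support_freshSeries_inter (hUps : S.UpsSpec F UpsB)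
    (hF : ∀ t l, IsSmoothCO (F t l)) (l : Dr) (N : List (PolyDec Lp d))
    (L : List (Odx Lp d × S.B)) (i : Fin (d+1)) (t : Lp) :
    (Function.support (S.freshSeries l N L i) ∩ Function.support (UpsB t)).Finite := by
  refine ((isSmoothCO_nodeDeriv hF t l N L).finite_support_dpart.image
    (S.addFresh l N L i)).subset fun σ ⟨hσ, ht⟩ => ?_
  obtain ⟨o, rfl⟩ : ∃ o, σ = S.addFresh l N L i o := by
    by_contra h
    exact hσ (if_neg h)
  exact ⟨o, hUps.dpart_ne_zero_of_addFresh ht, rfl⟩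

theorem finite_support_replaceSeries_inter (hUps : S.UpsSpec F UpsB) (l : Dr)
    (N : List (PolyDec Lp d)) (j : Fin L.length) (t : Lp) {c : S.B → ℝ}
    (hc : (Function.support c ∩ Function.support (UpsB (L.get j).1.1)).Finite) :
    (Function.support (S.replaceSeries l N L j c) ∩ Function.support (UpsB t)).Finite := by
  refine (hc.image (S.replaceBranch l N L j)).subset fun σ ⟨hσ, ht⟩ => ?_
  obtain ⟨σ', hσ', rfl⟩ :=
    support_finsum_mul_ite_subset (S.replaceBranch_injective l N L j) c hσ
  exact ⟨σ', ⟨hσ', hUps.ne_zero_of_replaceBranch ht⟩, rfl⟩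

/-- The series `↑_i σ` itself is infinite (it contains a tree with a fresh factor
`𝓘_o[X^{p+e_i}]` for every `o = (𝔱,p) ∈ 𝒪`); only finitely many of its trees survive `Υ̊^F`. -/
theorem finite_support_raise_inter (hUps : S.UpsSpec F UpsB)
    {raise : Fin (d+1) → S.B → (S.B → ℝ)} (hraise : S.RaiseSpec raise)
    (hF : ∀ t l, IsSmoothCO (F t l)) (i : Fin (d+1)) (σ : S.B) (t : Lp) :
    (Function.support (raise i σ) ∩ Function.support (UpsB t)).Finite := by
  induction σ using S.ind_list generalizing t with
  | node l N L ih =>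
    have hbump := (S.finite_support_bumpSeries l N L i).inter_of_left (Function.support (UpsB t))
    refine ((hbump.union (hUps.finite_support_freshSeries_inter hF l N L i t)).union
      (Set.finite_iUnion fun j =>
        hUps.finite_support_replaceSeries_inter l N j t (ih j _))).subset ?_
    rintro σ ⟨hσ, ht⟩
    rw [Function.mem_support, hraise.apply_node] at hσ
    by_cases h1 : S.bumpSeries l N L i σ = 0
    · by_cases h2 : S.freshSeries l N L i σ = 0
      · rw [h1, h2, zero_add, zero_add] at hσ
        obtain ⟨j, -, hj⟩ := Finset.exists_ne_zero_of_sum_ne_zero hσ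
        exact Or.inr (Set.mem_iUnion.2 ⟨j, hj, ht⟩)
      · exact Or.inl (Or.inr ⟨h2, ht⟩)
    · exact Or.inl (Or.inl ⟨h1, ht⟩)

theorem finsum_raise_node_mul (hUps : S.UpsSpec F UpsB)
    {raise : Fin (d+1) → S.B → (S.B → ℝ)} (hraise : S.RaiseSpec raise)
    (hF : ∀ t l, IsSmoothCO (F t l)) (t : Lp) (x : Odx Lp d → ℝ) :
    ∑ᶠ σ, raise i (S.node l ↑N ↑L) σ * UpsB t σ x =
      ∑ ib, UpsB t (S.bumpAt l N L i ib) x + ∑ᶠ o, UpsB t (S.addFresh l N L i o) x +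
        ∑ j, ∑ᶠ σ', raise i (L.get j).2 σ' * UpsB t (S.replaceBranch l N L j σ') x := by
  have hfin : ∀ c : S.B → ℝ, (Function.support c ∩ Function.support (UpsB t)).Finite →
      (Function.support fun σ => c σ * UpsB t σ x).Finite := fun c hc =>
    hc.subset fun σ hσ => ⟨left_ne_zero_of_mul hσ, fun h0 => hσ (by simp [h0])⟩
  have hbump := hfin _ ((S.finite_support_bumpSeries l N L i).inter_of_left _)
  have hfresh := hfin _ (hUps.finite_support_freshSeries_inter hF l N L i t)
  have hrep : ∀ j : Fin L.length, (Function.support fun σ =>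
      S.replaceSeries l N L j (raise i (L.get j).2) σ * UpsB t σ x).Finite :=
    fun j => hfin _ (hUps.finite_support_replaceSeries_inter l N j t
      (hUps.finite_support_raise_inter hraise hF i _ _))
  have hreps : (Function.support fun σ =>
      ∑ j, S.replaceSeries l N L j (raise i (L.get j).2) σ * UpsB t σ x).Finite :=
    (Set.finite_iUnion hrep).subset fun σ hσ => by
      obtain ⟨j, -, hj⟩ := Finset.exists_ne_zero_of_sum_ne_zero hσ
      exact Set.mem_iUnion.2 ⟨j, hj⟩
  simp only [hraise.apply_node, add_mul, Finset.sum_mul]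
  rw [finsum_add_distrib (hbump.union hfresh |>.subset (Function.support_add _ _)) hreps,
    finsum_add_distrib hbump hfresh, finsum_sum_comm _ _ fun j _ => hrep j]
  congr 1
  · congr 1
    · exact finsum_sum_ite_eq_mul _ _ _
    · exact finsum_exists_ite_mul (S.addFresh_injective l N L i) _
  · exact Finset.sum_congr rfl fun j _ =>
      finsum_finsum_mul_ite_mul (S.replaceBranch_injective l N L j) _ _

theorem finsum_raise_mul (hUps : S.UpsSpec F UpsB)
    {raise : Fin (d+1) → S.B → (S.B → ℝ)} (hraise : S.RaiseSpec raise)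
    (hF : ∀ t l, IsSmoothCO (F t l)) (i : Fin (d+1)) (σ : S.B) (t : Lp) :
    (fun x => ∑ᶠ σ'', raise i σ σ'' * UpsB t σ'' x) = pderivO i (UpsB t σ) := by
  induction σ using S.ind_list generalizing t with
  | node l N L ih =>
    funext x
    rw [hUps.finsum_raise_node_mul hraise hF, hUps.pderivO_apply_node hF]
    congr 1
    refine Finset.sum_congr rfl fun j _ => ?_
    rw [← congrFun (ih j (L.get j).1.1) x, finsum_mul, mul_finsum, finsum_mul]
    exact finsum_congr fun σ' => by rw [hUps.apply_replaceBranch]; ring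

end UpsSpec

end TreeB

theorem statement3_general
    {d : ℕ} {Lp Dr : Type} [Fintype Lp] [DecidableEq Lp]
    (Om Op : Set (Odx Lp d))
    (F : Lp → Dr → FnO Lp d) (hF : ∀ t l, IsP Om Op (F t l))
    (SB : TreeB Lp Dr d)
    (UpsB : Lp → SB.B → FnO Lp d) (hUpsB : SB.UpsSpec F UpsB)
    (raiseB : Fin (d+1) → SB.B → (SB.B → ℝ)) (hraiseB : SB.RaiseSpec raiseB) :
    (∀ (i : Fin (d+1)) (σ : SB.B),
      {σ'' : SB.B | raiseB i σ σ'' ≠ 0 ∧ ∃ t, UpsB t σ'' ≠ 0}.Finite) ∧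
      ∀ (i : Fin (d+1)) (σ : SB.B) (t : Lp),
        (fun x => ∑ᶠ σ'' : SB.B, raiseB i σ σ'' * UpsB t σ'' x) =
          pderivO i (UpsB t σ) := by
  have hFs : ∀ t l, IsSmoothCO (F t l) := fun t l => (hF t l).isSmoothCO
  refine ⟨fun i σ => ?_, hUpsB.finsum_raise_mul hraiseB hFs⟩
  refine (Set.finite_iUnion fun t => hUpsB.finite_support_raise_inter hraiseB hFs i σ t).subset ?_
  rintro σ'' ⟨hr, t, ht⟩
  exact Set.mem_iUnion.2 ⟨t, hr, ht⟩

/-- Lemma `lem:graftMorphism`, second identity: the raising morphism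
property of `Υ̊`: the map `Υ̊^F` vanishes on all but finitely many of the trees appearing in
the formal series `↑_l σ`, and `Υ̊^F[↑_l σ] = ∂_l Υ̊^F[σ]` componentwise. -/
theorem statement3
    {d : ℕ} {Lp Dr : Type} [Fintype Lp] [DecidableEq Lp]
    (Om Op : Set (Odx Lp d))
    (hdisj : ∀ o, ¬(o ∈ Om ∧ o ∈ Op)) (hcover : ∀ o, o ∈ Om ∨ o ∈ Op)
    (F : Lp → Dr → FnO Lp d) (hF : ∀ t l, IsP Om Op (F t l))
    (SB : TreeB Lp Dr d)
    (UpsB : Lp → SB.B → FnO Lp d) (hUpsB : SB.UpsSpec F UpsB)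
    (raiseB : Fin (d+1) → SB.B → (SB.B → ℝ)) (hraiseB : SB.RaiseSpec raiseB) :
    (∀ (i : Fin (d+1)) (σ : SB.B),
      {σ'' : SB.B | raiseB i σ σ'' ≠ 0 ∧ ∃ t, UpsB t σ'' ≠ 0}.Finite) ∧
      ∀ (i : Fin (d+1)) (σ : SB.B) (t : Lp),
        (fun x => ∑ᶠ σ'' : SB.B, raiseB i σ σ'' * UpsB t σ'' x) =
          pderivO i (UpsB t σ) :=
  statement3_general Om Op F hF SB UpsB hUpsB raiseB hraiseB

end SPDERenorm
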